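/- arXiv:1410.5351 — 4 statements merged into one kernel-verified Lean document; each statement's English description precedes it below -/
import Mathlib

section
/- If S is a finitely generated residually finite semigroup, then every surjective semigroup endomorphism of S is injective (i.e., S is Hopfian). -/
/-!
If `ψ` is surjective, precomposition with `ψ` is an injective self-map of the finite set of
homomorphisms from `S` to a finite semigroup `T`, hence a bijection. So every `ρ : S → T` factors
as `φ ∘ ψ`, and `ψ a = ψ b` forces `ρ a = ρ b`; residual finiteness then gives `a = b`.
-/

def SemigroupResiduallyFinite (S : Type) [Semigroup S] : Prop :=
  ∀ s1 s2 : S, s1 ≠ s2 → ∃ (T : Type) (mT : Semigroup T), Finite T ∧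
    ∃ ρ : S → T, (∀ a b : S, ρ (a * b) = mT.mul (ρ a) (ρ b)) ∧ ρ s1 ≠ ρ s2

theorem SemigroupResiduallyFinite.exists_mulHom_ne {S : Type} [Semigroup S]
    (hS : SemigroupResiduallyFinite S) {a b : S} (hab : a ≠ b) :
    ∃ (T : Type) (_ : Semigroup T), Finite T ∧ ∃ ρ : S →ₙ* T, ρ a ≠ ρ b := by
  obtain ⟨T, mT, hT, ρ, hρ, hne⟩ := hS a b hab
  exact ⟨T, mT, hT, ⟨ρ, hρ⟩, hne⟩

namespace MulHom

variable {M N : Type*} [Mul M] [Mul N]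

theorem finite_of_closure_eq_top [Finite N] {s : Set M} (hs : s.Finite)
    (hcl : Subsemigroup.closure s = ⊤) : Finite (M →ₙ* N) :=
  have := hs.to_subtype
  Finite.of_injective (fun f : M →ₙ* N => fun x : s => f x) fun _ _ hfg =>
    eq_of_eqOn_dense hcl fun x hx => congrFun hfg ⟨x, hx⟩

theorem exists_comp_eq_of_surjective [Finite (M →ₙ* N)] {ψ : M →ₙ* M}
    (hψ : Function.Surjective ψ) (ρ : M →ₙ* N) : ∃ φ : M →ₙ* N, φ.comp ψ = ρ :=
  Finite.injective_iff_surjective.mp (fun _ _ h => (cancel_right hψ).mp h) ρ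

end MulHom

/-- Every finitely generated residually finite semigroup is Hopfian. -/
theorem stmt_0 (S : Type) [Semigroup S]
    (hfg : ∃ F : Finset S, Subsemigroup.closure (F : Set S) = ⊤)
    (hrf : SemigroupResiduallyFinite S)
    (ψ : S →ₙ* S) (hsurj : Function.Surjective ψ) :
    Function.Injective ψ := by
  intro a b hab
  by_contra hne
  obtain ⟨T, _, _, ρ, hρ⟩ := hrf.exists_mulHom_ne hne
  obtain ⟨F, hF⟩ := hfg
  have := MulHom.finite_of_closure_eq_top (N := T) F.finite_toSet hF
  obtain ⟨φ, rfl⟩ := MulHom.exists_comp_eq_of_surjective hsurj ρ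
  exact hρ (congrArg φ hab)
end

section
/- Let M be a monoid and A a finite set with more than one element. If M is residually finite, then the monoid CA(M, A) of cellular automata over M with alphabet A is residually finite. -/
def shift {M A : Type} [Monoid M] (m : M) (x : M → A) : M → A :=
  fun m' => x (m' * m)

/-- A cellular automaton over `M` and `A`: a continuous (for the prodiscrete
topology), shift-equivariant self-map of `A^M`. -/
def IsCellularAutomaton {M A : Type} [Monoid M] [TopologicalSpace A]
    [DiscreteTopology A] (τ : (M → A) → (M → A)) : Prop :=
  Continuous τ ∧ ∀ (m : M) (x : M → A), τ (shift m x) = shift m (τ x)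

/-- `CA(M,A)`: the monoid of cellular automata, as a submonoid of the monoid of
all self-maps of `A^M` under composition. -/
def CAMonoid (M A : Type) [Monoid M] [TopologicalSpace A] [DiscreteTopology A] :
    Submonoid (Function.End (M → A)) where
  carrier := {τ | IsCellularAutomaton τ}
  one_mem' := ⟨continuous_id, fun _ _ => rfl⟩
  mul_mem' := fun {a b} ha hb =>
    ⟨ha.1.comp hb.1, fun m x => by
      show a (b (shift m x)) = shift m (a (b x))
      rw [hb.2, ha.2]⟩

/-- A monoid `M` is residually finite if any two distinct elements can be
separated by a monoid homomorphism into a finite monoid. -/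
def MonoidResiduallyFinite (M : Type) [Monoid M] : Prop :=
  ∀ m1 m2 : M, m1 ≠ m2 → ∃ (N : Type) (mN : Monoid N), Finite N ∧
    ∃ ρ : M → N, ρ 1 = mN.one ∧ (∀ a b : M, ρ (a * b) = mN.mul (ρ a) (ρ b)) ∧
      ρ m1 ≠ ρ m2

/-!
A cellular automaton is determined by the value of `x ↦ τ x 1`, and by compactness of `A^M`
this value depends only on a finite memory set `S ⊆ M`. Residual finiteness gives a
surjection `φ : M →* N` onto a finite monoid that is injective on `S`. Configurations of the form
`y ∘ φ` are preserved by every cellular automaton, which therefore descends to a self-map of the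
finite set `N → A`; this is a monoid homomorphism `CA(M,A) → End (N → A)`. If `τ₁ x 1 ≠ τ₂ x 1`,
injectivity of `φ` on `S` lets `y ∘ φ` copy `x` on `S`, and then the descended maps differ at `y`.
-/

open Function

theorem Continuous.exists_finset_dependsOn {ι B : Type*} {A : ι → Type*}
    [∀ i, TopologicalSpace (A i)] [∀ i, DiscreteTopology (A i)] [∀ i, CompactSpace (A i)]
    [TopologicalSpace B] [DiscreteTopology B] {f : (∀ i, A i) → B} (hf : Continuous f) :
    ∃ S : Finset ι, DependsOn f S := by
  classical
  have hcyl : ∀ x, ∃ I : Finset ι, (I : Set ι).pi (fun i => {x i}) ⊆ f ⁻¹' {f x} := by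
    intro x
    obtain ⟨I, u, hu, hsub⟩ := isOpen_pi_iff.mp ((isOpen_discrete {f x}).preimage hf) x rfl
    exact ⟨I, (Set.pi_mono fun i hi => Set.singleton_subset_iff.mpr (hu i hi).2).trans hsub⟩
  choose I hI using hcyl
  obtain ⟨t, -, hcover⟩ := isCompact_univ.elim_nhds_subcover
    (fun x => (I x : Set ι).pi fun i => {x i})
    (fun x _ => set_pi_mem_nhds (I x).finite_toSet fun i _ => isOpen_discrete {x i} |>.mem_nhds rfl)
  refine ⟨t.biUnion I, fun x y hxy => ?_⟩
  obtain ⟨x₀, hx₀, hx⟩ := Set.mem_iUnion₂.mp (hcover (Set.mem_univ x))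
  have hy : y ∈ (I x₀ : Set ι).pi fun i => {x₀ i} := fun i hi =>
    (hxy i (Finset.mem_biUnion.mpr ⟨x₀, hx₀, hi⟩)).symm.trans (hx i hi)
  exact (hI x₀ hx).trans (hI x₀ hy).symm

namespace MonoidResiduallyFinite

variable {M : Type} [Monoid M]

theorem exists_monoidHom_ne (hrf : MonoidResiduallyFinite M) {m₁ m₂ : M} (h : m₁ ≠ m₂) :
    ∃ (N : Type) (_ : Monoid N) (_ : Finite N) (φ : M →* N), φ m₁ ≠ φ m₂ := by
  obtain ⟨N, mN, hN, ρ, hρ1, hρmul, hne⟩ := hrf m₁ m₂ h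
  exact ⟨N, mN, hN, ⟨⟨ρ, hρ1⟩, hρmul⟩, hne⟩

theorem exists_monoidHom_injOn (hrf : MonoidResiduallyFinite M) {S : Set M} (hS : S.Finite) :
    ∃ (N : Type) (_ : Monoid N) (_ : Finite N) (φ : M →* N), Set.InjOn φ S := by
  let T : Set (M × M) := {p ∈ S ×ˢ S | p.1 ≠ p.2}
  have : Finite T := ((hS.prod hS).subset (Set.sep_subset _ _)).to_subtype
  choose N mN hN φ hφ using fun p : T => hrf.exists_monoidHom_ne p.2.2
  refine ⟨∀ p : T, N p, inferInstance, inferInstance, MonoidHom.pi φ, fun s hs u hu hsu => ?_⟩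
  by_contra hne
  exact hφ ⟨(s, u), ⟨hs, hu⟩, hne⟩ (congrFun hsu _)

theorem exists_surjective_injOn (hrf : MonoidResiduallyFinite M) {S : Set M} (hS : S.Finite) :
    ∃ (N : Type) (_ : Monoid N) (_ : Finite N) (φ : M →* N), Surjective φ ∧ Set.InjOn φ S := by
  obtain ⟨N, _, _, φ, hφ⟩ := hrf.exists_monoidHom_injOn hS
  exact ⟨MonoidHom.mrange φ, inferInstance, inferInstance, φ.mrangeRestrict,
    φ.mrangeRestrict_surjective, fun s hs u hu h => hφ hs hu (congrArg Subtype.val h)⟩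

end MonoidResiduallyFinite

namespace IsCellularAutomaton

variable {M N A : Type} [Monoid M] [Monoid N] [TopologicalSpace A] [DiscreteTopology A]
  {τ : (M → A) → (M → A)}

theorem apply_eq_apply_shift_one (hτ : IsCellularAutomaton τ) (x : M → A) (m : M) :
    τ x m = τ (shift m x) 1 := by
  rw [hτ.2]
  simp [shift]

theorem eq_of_forall_apply_one_eq {τ' : (M → A) → (M → A)} (hτ : IsCellularAutomaton τ)
    (hτ' : IsCellularAutomaton τ') (h : ∀ x, τ x 1 = τ' x 1) : τ = τ' := by
  ext x m
  rw [hτ.apply_eq_apply_shift_one, hτ'.apply_eq_apply_shift_one, h]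

theorem exists_finset_dependsOn_apply_one [Finite A] (hτ : IsCellularAutomaton τ) :
    ∃ S : Finset M, DependsOn (fun x => τ x 1) S :=
  ((continuous_apply 1).comp hτ.1).exists_finset_dependsOn

theorem factorsThrough_comp (hτ : IsCellularAutomaton τ) (φ : M →* N) (y : N → A) :
    FactorsThrough (τ (y ∘ φ)) φ := by
  intro m m' h
  rw [hτ.apply_eq_apply_shift_one _ m, hτ.apply_eq_apply_shift_one _ m']
  congr 1
  ext n
  simp [shift, h]

-- The choice of preimage is irrelevant by `factorsThrough_comp`.
noncomputable def descend {φ : M →* N} (hφ : Surjective φ) (τ : (M → A) → (M → A)) :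
    (N → A) → (N → A) :=
  fun y n => τ (y ∘ φ) (surjInv hφ n)

theorem descend_comp (hτ : IsCellularAutomaton τ) {φ : M →* N} (hφ : Surjective φ) (y : N → A) :
    descend hφ τ y ∘ φ = τ (y ∘ φ) :=
  funext fun m => hτ.factorsThrough_comp φ y (surjInv_eq hφ (φ m))

end IsCellularAutomaton

namespace CAMonoid

variable {M N A : Type} [Monoid M] [Monoid N] [TopologicalSpace A] [DiscreteTopology A]

noncomputable def descendHom {φ : M →* N} (hφ : Surjective φ) :
    CAMonoid M A →* Function.End (N → A) where
  toFun τ := IsCellularAutomaton.descend hφ τ.1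
  map_one' := funext fun y => hφ.injective_comp_right ((1 : CAMonoid M A).2.descend_comp hφ y)
  map_mul' τ τ' := funext fun y => hφ.injective_comp_right <| by
    have hττ' : IsCellularAutomaton (τ.1 ∘ τ'.1) := (τ * τ').2
    change IsCellularAutomaton.descend hφ (τ.1 ∘ τ'.1) y ∘ φ =
      IsCellularAutomaton.descend hφ τ.1 (IsCellularAutomaton.descend hφ τ'.1 y) ∘ φ
    rw [hττ'.descend_comp, τ.2.descend_comp, τ'.2.descend_comp]
    rfl

theorem descendHom_apply {φ : M →* N} (hφ : Surjective φ) (τ : CAMonoid M A) :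
    descendHom hφ τ = IsCellularAutomaton.descend hφ τ.1 :=
  rfl

theorem exists_descendHom_ne [Finite A] (hrf : MonoidResiduallyFinite M) {τ₁ τ₂ : CAMonoid M A}
    (h : τ₁ ≠ τ₂) : ∃ (N : Type) (_ : Monoid N) (_ : Finite N) (φ : M →* N) (hφ : Surjective φ),
      descendHom hφ τ₁ ≠ descendHom hφ τ₂ := by
  classical
  obtain ⟨x, hx⟩ : ∃ x, τ₁.1 x 1 ≠ τ₂.1 x 1 := by
    by_contra! hall
    exact h (Subtype.ext (τ₁.2.eq_of_forall_apply_one_eq τ₂.2 hall))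
  obtain ⟨S₁, hS₁⟩ := τ₁.2.exists_finset_dependsOn_apply_one
  obtain ⟨S₂, hS₂⟩ := τ₂.2.exists_finset_dependsOn_apply_one
  let S : Set M := ↑(S₁ ∪ S₂)
  obtain ⟨N, _, _, φ, hφ, hinj⟩ := hrf.exists_surjective_injOn (S₁ ∪ S₂).finite_toSet
  let y : N → A := x ∘ invFunOn φ S
  have hyx : ∀ s ∈ S, (y ∘ φ) s = x s := fun s hs => congrArg x (hinj.leftInvOn_invFunOn hs)
  refine ⟨N, inferInstance, inferInstance, φ, hφ, fun heq => hx ?_⟩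
  have key : ∀ τ : CAMonoid M A, descendHom hφ τ y (φ 1) = τ.1 (y ∘ φ) 1 :=
    fun τ => by rw [descendHom_apply]; exact congrFun (τ.2.descend_comp hφ y) 1
  calc τ₁.1 x 1 = τ₁.1 (y ∘ φ) 1 :=
        hS₁ fun s hs => (hyx s (Finset.mem_union_left _ hs)).symm
    _ = τ₂.1 (y ∘ φ) 1 := by rw [← key, ← key, heq]
    _ = τ₂.1 x 1 := hS₂ fun s hs => hyx s (Finset.mem_union_right _ hs)

end CAMonoid

theorem stmt_16_general (M A : Type) [Monoid M] [Finite A]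
    [TopologicalSpace A] [DiscreteTopology A]
    (hrf : MonoidResiduallyFinite M) :
    ∀ τ1 τ2 : CAMonoid M A, τ1 ≠ τ2 →
      ∃ (N : Type) (mN : Monoid N), Finite N ∧
        ∃ Φ : CAMonoid M A → N, Φ 1 = mN.one ∧
          (∀ a b : CAMonoid M A, Φ (a * b) = mN.mul (Φ a) (Φ b)) ∧
          Φ τ1 ≠ Φ τ2 := by
  intro τ₁ τ₂ h
  obtain ⟨N, _, _, φ, hφ, hne⟩ := CAMonoid.exists_descendHom_ne hrf h
  exact ⟨Function.End (N → A), inferInstance, inferInstanceAs (Finite ((N → A) → (N → A))),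
    CAMonoid.descendHom hφ, map_one _, map_mul _, hne⟩

/-- If `M` is a residually finite monoid and `A` a finite alphabet with more than
one element, then the monoid `CA(M,A)` is residually finite. -/
theorem stmt_16 (M A : Type) [Monoid M] [Finite A] [Nontrivial A]
    [TopologicalSpace A] [DiscreteTopology A]
    (hrf : MonoidResiduallyFinite M) :
    ∀ τ1 τ2 : CAMonoid M A, τ1 ≠ τ2 →
      ∃ (N : Type) (mN : Monoid N), Finite N ∧
        ∃ Φ : CAMonoid M A → N, Φ 1 = mN.one ∧
          (∀ a b : CAMonoid M A, Φ (a * b) = mN.mul (Φ a) (Φ b)) ∧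
          Φ τ1 ≠ Φ τ2 :=
  stmt_16_general M A hrf
end

section
/- Let M be a monoid and A a finite set with more than one element. If the monoid CA(M, A) is residually finite, then M is residually finite. -/
/-! The left translations `τ_m x = fun m' => x (m * m')` are cellular automata, and `m ↦ τ_m` is
an anti-homomorphism `M → CA(M,A)`, injective as soon as `A` has two distinct letters. Hence `M`
embeds into the opposite of `CA(M,A)`, and residual finiteness passes to opposite monoids and to
monoids that embed into a residually finite one. -/

theorem monoidResiduallyFinite_iff (M : Type) [Monoid M] :
    MonoidResiduallyFinite M ↔ ∀ m₁ m₂ : M, m₁ ≠ m₂ →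
      ∃ (N : Type) (_ : Monoid N), Finite N ∧ ∃ f : M →* N, f m₁ ≠ f m₂ := by
  refine forall₂_congr fun m₁ m₂ => imp_congr_right fun _ => ?_
  refine exists_congr fun N => exists_congr fun _ => and_congr_right fun _ => ⟨?_, ?_⟩
  · rintro ⟨ρ, hone, hmul, hne⟩
    exact ⟨⟨⟨ρ, hone⟩, hmul⟩, hne⟩
  · rintro ⟨f, hne⟩
    exact ⟨f, f.map_one, f.map_mul, hne⟩

namespace MonoidResiduallyFinite

variable {M N : Type} [Monoid M] [Monoid N]

theorem of_injective (hN : MonoidResiduallyFinite N) (f : M →* N)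
    (hf : Function.Injective f) : MonoidResiduallyFinite M := by
  rw [monoidResiduallyFinite_iff] at hN ⊢
  intro m₁ m₂ hne
  obtain ⟨F, _, hF, g, hg⟩ := hN (f m₁) (f m₂) (hf.ne hne)
  exact ⟨F, _, hF, g.comp f, hg⟩

theorem op (hM : MonoidResiduallyFinite M) : MonoidResiduallyFinite Mᵐᵒᵖ := by
  rw [monoidResiduallyFinite_iff] at hM ⊢
  intro m₁ m₂ hne
  obtain ⟨F, _, hF, f, hf⟩ := hM m₁.unop m₂.unop (MulOpposite.unop_injective.ne hne)
  exact ⟨Fᵐᵒᵖ, _, Finite.of_equiv F MulOpposite.opEquiv, MonoidHom.op f,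
    MulOpposite.op_injective.ne hf⟩

end MonoidResiduallyFinite

section LeftTranslation

variable {M A : Type} [Monoid M]

def leftTranslate (m : M) (x : M → A) : M → A := fun m' => x (m * m')

theorem leftTranslate_one : leftTranslate (A := A) (1 : M) = id := by
  funext x m'
  simp [leftTranslate]

theorem leftTranslate_mul (m n : M) :
    leftTranslate (A := A) (m * n) = leftTranslate n ∘ leftTranslate m := by
  funext x m'
  simp [leftTranslate, mul_assoc]

theorem leftTranslate_injective [Nontrivial A] :
    Function.Injective (leftTranslate (M := M) (A := A)) := by
  classical
  intro m₁ m₂ h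
  by_contra hne
  obtain ⟨a, b, hab⟩ := exists_pair_ne A
  -- `leftTranslate m x 1 = x m`, so a configuration separating `m₁` from `m₂` separates the maps.
  have := congrFun (congrFun h fun m => if m = m₁ then a else b) 1
  simp only [leftTranslate, mul_one, if_pos, if_neg (Ne.symm hne)] at this
  exact hab this

variable [TopologicalSpace A] [DiscreteTopology A]

theorem isCellularAutomaton_leftTranslate (m : M) :
    IsCellularAutomaton (leftTranslate (A := A) m) :=
  ⟨continuous_pi fun m' => continuous_apply (m * m'),
    fun n x => by funext m'; simp [leftTranslate, shift, mul_assoc]⟩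

variable (M A) in
def leftTranslateHom : M →* (CAMonoid M A)ᵐᵒᵖ where
  toFun m := MulOpposite.op ⟨leftTranslate m, isCellularAutomaton_leftTranslate m⟩
  map_one' := by
    congr 1
    exact Subtype.ext leftTranslate_one
  map_mul' m n := by
    rw [← MulOpposite.op_mul]
    congr 1
    exact Subtype.ext (leftTranslate_mul m n)

theorem leftTranslateHom_injective [Nontrivial A] :
    Function.Injective (leftTranslateHom M A) := fun _ _ h =>
  leftTranslate_injective (congrArg Subtype.val (MulOpposite.op_injective h))

end LeftTranslation

theorem stmt_17_general (M A : Type) [Monoid M] [Nontrivial A]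
    [TopologicalSpace A] [DiscreteTopology A]
    (hca : ∀ τ1 τ2 : CAMonoid M A, τ1 ≠ τ2 →
      ∃ (N : Type) (mN : Monoid N), Finite N ∧
        ∃ Φ : CAMonoid M A → N, Φ 1 = mN.one ∧
          (∀ a b : CAMonoid M A, Φ (a * b) = mN.mul (Φ a) (Φ b)) ∧
          Φ τ1 ≠ Φ τ2) :
    MonoidResiduallyFinite M :=
  MonoidResiduallyFinite.of_injective (MonoidResiduallyFinite.op hca)
    (leftTranslateHom M A) leftTranslateHom_injective

/-- If the monoid `CA(M,A)` is residually finite (`A` a finite alphabet with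
more than one element), then `M` is residually finite. -/
theorem stmt_17 (M A : Type) [Monoid M] [Finite A] [Nontrivial A]
    [TopologicalSpace A] [DiscreteTopology A]
    (hca : ∀ τ1 τ2 : CAMonoid M A, τ1 ≠ τ2 →
      ∃ (N : Type) (mN : Monoid N), Finite N ∧
        ∃ Φ : CAMonoid M A → N, Φ 1 = mN.one ∧
          (∀ a b : CAMonoid M A, Φ (a * b) = mN.mul (Φ a) (Φ b)) ∧
          Φ τ1 ≠ Φ τ2) :
    MonoidResiduallyFinite M :=
  stmt_17_general M A hca
end

section
/- Let M be a monoid and A a finite set with more than one element. If M is residually finite then for any two distinct continuous maps f, g : A^M → A^M there exists a periodic configuration x ∈ A^M with f(x) ≠ g(x). -/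
/-!
Periodic configurations are dense in `A^M`: given a configuration `x₀` and a finite window
`I ⊆ M`, the product of finitely many finite quotients separating the points of `I` gives a
homomorphism `ρ : M →* P` to a finite monoid that is injective on `I`, and every configuration
`y ∘ ρ` is periodic, since its shifts are among the maps `m' ↦ y (ρ m' * n)`, `n ∈ P`.
Choosing `y` to reproduce `x₀` on `ρ '' I` approximates `x₀`.
Two continuous maps into the Hausdorff space `A^M` that agree on a dense set are equal.
-/

theorem dense_of_forall_finset_exists_eqOn {ι : Type*} {X : ι → Type*}
    [∀ i, TopologicalSpace (X i)] {S : Set (∀ i, X i)}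
    (h : ∀ (x : ∀ i, X i) (I : Finset ι), ∃ y ∈ S, ∀ i ∈ I, y i = x i) : Dense S := by
  refine dense_iff_inter_open.2 fun U hU ⟨x, hxU⟩ => ?_
  obtain ⟨I, u, hu, hIu⟩ := isOpen_pi_iff.1 hU x hxU
  obtain ⟨y, hyS, hyx⟩ := h x I
  exact ⟨y, hIu fun i hi => hyx i hi ▸ (hu i hi).2, hyS⟩

theorem MonoidResiduallyFinite.exists_monoidHom_injOn_s18 {M : Type} [Monoid M]
    (hM : MonoidResiduallyFinite M) {I : Set M} (hI : I.Finite) :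
    ∃ (P : Type) (_ : Monoid P), Finite P ∧ ∃ ρ : M →* P, Set.InjOn ρ I := by
  let ι := {p : M × M // p ∈ I ×ˢ I ∧ p.1 ≠ p.2}
  have : Finite ι := ((hI.prod hI).subset fun _ hp => hp.1).to_subtype
  choose N mN hN ρ hρ1 hρmul hρne using fun p : ι => hM p.1.1 p.1.2 p.2.2
  let _ : ∀ p, Monoid (N p) := mN
  let ρ' (p : ι) : M →* N p := { toFun := ρ p, map_one' := hρ1 p, map_mul' := hρmul p }
  refine ⟨∀ p, N p, Pi.monoid, Pi.finite, MonoidHom.pi ρ', fun s hs t ht hst => ?_⟩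
  by_contra hne
  exact hρne ⟨(s, t), ⟨hs, ht⟩, hne⟩ (congrFun hst ⟨(s, t), ⟨hs, ht⟩, hne⟩)

theorem finite_range_shift_comp_monoidHom {M A P : Type} [Monoid M] [Monoid P] [Finite P]
    (ρ : M →* P) (y : P → A) : (Set.range fun m : M => shift m (y ∘ ρ)).Finite := by
  refine (Set.finite_range fun n : P => fun m' => y (ρ m' * n)).subset ?_
  rintro _ ⟨m, rfl⟩
  exact ⟨ρ m, funext fun m' => by simp [shift]⟩

theorem MonoidResiduallyFinite.dense_finite_range_shift {M : Type} [Monoid M]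
    (hM : MonoidResiduallyFinite M) (A : Type) [TopologicalSpace A] :
    Dense {x : M → A | (Set.range fun m : M => shift m x).Finite} := by
  refine dense_of_forall_finset_exists_eqOn fun x₀ I => ?_
  obtain ⟨P, _, _, ρ, hρ⟩ := hM.exists_monoidHom_injOn_s18 I.finite_toSet
  refine ⟨(x₀ ∘ Function.invFunOn ρ I) ∘ ρ, finite_range_shift_comp_monoidHom ρ _,
    fun s hs => ?_⟩
  exact congrArg x₀ (hρ.leftInvOn_invFunOn hs)

theorem stmt_18_general (M A : Type) [Monoid M]
    [TopologicalSpace A] [DiscreteTopology A]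
    (hrf : MonoidResiduallyFinite M)
    (f g : (M → A) → (M → A)) (hf : Continuous f) (hg : Continuous g)
    (hfg : f ≠ g) :
    ∃ x : M → A, (Set.range fun m : M => shift m x).Finite ∧ f x ≠ g x := by
  by_contra! h
  exact hfg (Continuous.ext_on (hrf.dense_finite_range_shift A) hf hg h)

/-- If `M` is residually finite and `A` is a finite set with more than one
element, then any two distinct continuous self-maps of `A^M` (prodiscrete
topology) differ at some periodic configuration. -/
theorem stmt_18 (M A : Type) [Monoid M] [Finite A] [Nontrivial A]
    [TopologicalSpace A] [DiscreteTopology A]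
    (hrf : MonoidResiduallyFinite M)
    (f g : (M → A) → (M → A)) (hf : Continuous f) (hg : Continuous g)
    (hfg : f ≠ g) :
    ∃ x : M → A, (Set.range fun m : M => shift m x).Finite ∧ f x ≠ g x :=
  stmt_18_general M A hrf f g hf hg hfg
end
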